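/- Let (X_k)_{k≥1} be a negatively dependent sequence of subgaussian random variables with subgaussian standards τ_k = τ(X_k), and let (a_k)_{k≥1} be real numbers. Then for all 0 ≤ n < m and all t ∈ ℝ, E[exp(t Σ_{k=n+1}^{m} a_k X_k)] ≤ exp( t² Σ_{k=n+1}^{m} a_k² τ_k² ). -/

import Mathlib

open MeasureTheory ProbabilityTheory Real Filter Finset Set Topology

/-- Orlicz norm associated with the Young function φ(x) = exp(x²) − 1. -/
noncomputable def orliczNorm {Ω : Type*} [MeasurableSpace Ω] (P : Measure Ω) (X : Ω → ℝ) : ℝ :=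
  sInf {c : ℝ | 0 < c ∧ ∫ ω, (Real.exp ((|X ω| / c) ^ 2) - 1) ∂P ≤ 1}

/-- Membership in the Orlicz space L^φ(Ω): E[φ(a|X|)] < ∞ for some a > 0. -/
def MemLphi {Ω : Type*} [MeasurableSpace Ω] (P : Measure Ω) (X : Ω → ℝ) : Prop :=
  ∃ a : ℝ, 0 < a ∧ Integrable (fun ω => Real.exp ((a * |X ω|) ^ 2) - 1) P

/-- The constant C(α) = (2^{2α+2}/√α) ∫_{√(α ln 3)}^∞ x² e^{−x²} dx. -/
noncomputable def Cconst (α : ℝ) : ℝ :=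
  (2 : ℝ) ^ (2 * α + 2) / Real.sqrt α *
    ∫ x in Set.Ioi (Real.sqrt (α * Real.log 3)), x ^ 2 * Real.exp (-x ^ 2)

/-- `X` is subgaussian with admissible constant `c`:
E[exp(tX)] ≤ exp(c²t²/2) for all t (stated with the lower integral,
which in particular encodes finiteness of the exponential moments). -/
def IsSubgaussianWith {Ω : Type*} [MeasurableSpace Ω] (P : Measure Ω) (X : Ω → ℝ) (c : ℝ) : Prop :=
  0 ≤ c ∧ ∀ t : ℝ, ∫⁻ ω, ENNReal.ofReal (Real.exp (t * X ω)) ∂P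
    ≤ ENNReal.ofReal (Real.exp (c ^ 2 * t ^ 2 / 2))

/-- `X` is subgaussian. -/
def Subgaussian {Ω : Type*} [MeasurableSpace Ω] (P : Measure Ω) (X : Ω → ℝ) : Prop :=
  ∃ c : ℝ, IsSubgaussianWith P X c

/-- The subgaussian standard τ(X). -/
noncomputable def subgStd {Ω : Type*} [MeasurableSpace Ω] (P : Measure Ω) (X : Ω → ℝ) : ℝ :=
  sInf {c : ℝ | IsSubgaussianWith P X c}

/-- Negative dependence of a sequence of random variables. -/
def NegDep {Ω : Type*} [MeasurableSpace Ω] (P : Measure Ω) (X : ℕ → Ω → ℝ) : Prop :=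
  ∀ (s : Finset ℕ) (x : ℕ → ℝ),
    P {ω | ∀ k ∈ s, X k ω ≤ x k} ≤ ∏ k ∈ s, P {ω | X k ω ≤ x k} ∧
    P {ω | ∀ k ∈ s, x k < X k ω} ≤ ∏ k ∈ s, P {ω | x k < X k ω}

/-- A (𝓑, c²)-conditionally subgaussian sequence (relevant indices k ≥ 1):
a martingale difference sequence w.r.t. the filtration `B` (with `B 0` trivial)
whose conditional moment generating functions satisfy the subgaussian bound. -/
def CondSubgaussianSeq {Ω : Type*} {mΩ : MeasurableSpace Ω} (P : Measure Ω)
    (B : ℕ → MeasurableSpace Ω) (c : ℕ → ℝ) (X : ℕ → Ω → ℝ) : Prop :=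
  Monotone B ∧ (∀ k, B k ≤ mΩ) ∧ B 0 = ⊥ ∧ (∀ k, 1 ≤ k → 0 < c k) ∧
  (∀ k, 1 ≤ k → StronglyMeasurable[B k] (X k)) ∧
  (∀ k, 1 ≤ k → Integrable (X k) P) ∧
  (∀ k, 1 ≤ k → P[X k | B (k - 1)] =ᵐ[P] 0) ∧
  (∀ k, 1 ≤ k → ∀ t : ℝ, Integrable (fun ω => Real.exp (t * X k ω)) P ∧
    P[(fun ω => Real.exp (t * X k ω)) | B (k - 1)] ≤ᵐ[P] fun _ => Real.exp (c k ^ 2 * t ^ 2 / 2))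

/-- A sequence whose partial sums have d_{ũ,α}-subgaussian increments. -/
def SubgaussianIncrements {Ω : Type*} [MeasurableSpace Ω] (P : Measure Ω)
    (u : ℕ → ℝ) (α : ℝ) (Y : ℕ → Ω → ℝ) : Prop :=
  ∀ n m : ℕ, n < m → ∀ l : ℝ,
    ∫⁻ ω, ENNReal.ofReal (Real.exp (l * ∑ k ∈ Finset.Icc (n + 1) m, Y k ω)) ∂P
      ≤ ENNReal.ofReal
          (Real.exp (((∑ k ∈ Finset.Icc (n + 1) m, u k) ^ α) ^ 2 * l ^ 2 / 2))

/-!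
Split the weights by sign. By Cauchy–Schwarz, `E exp (∑ b_k X_k) ≤ (E exp 2F)^½ (E exp 2G)^½`,
where `F` carries the nonnegative weights and `G` the negative ones, so that `G` is a nonnegative
combination of the `-X_k`. Both `(X_k)` and `(-X_k)` are negatively upper orthant dependent, and
for such a family `E ∏ exp (c_k Y_k) ≤ ∏ E exp (c_k Y_k)` whenever all `c_k ≥ 0`: writing one
factor by the layer-cake formula, its level sets are upper orthant events, which an induction on
the number of factors absorbs. Each factor is then bounded by the subgaussian estimate at the
infimum `τ_k`, which is attained.
-/

open scoped ENNReal

section Subgaussian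

variable {Ω : Type*} [MeasurableSpace Ω] {P : Measure Ω} {X : Ω → ℝ}

theorem isClosed_setOf_isSubgaussianWith : IsClosed {c | IsSubgaussianWith P X c} := by
  simp only [IsSubgaussianWith, Set.ofPred_and, Set.ofPred_forall]
  exact (isClosed_le continuous_const continuous_id).inter <| isClosed_iInter fun t =>
    isClosed_le continuous_const (ENNReal.continuous_ofReal.comp (by fun_prop))

theorem Subgaussian.isSubgaussianWith_subgStd (h : Subgaussian P X) :
    IsSubgaussianWith P X (subgStd P X) :=
  isClosed_setOf_isSubgaussianWith.csInf_mem h ⟨0, fun _ hc => hc.1⟩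

theorem IsSubgaussianWith.neg {c : ℝ} (h : IsSubgaussianWith P X c) :
    IsSubgaussianWith P (fun ω => -X ω) c :=
  ⟨h.1, fun t => by simpa only [neg_mul_comm, neg_sq] using h.2 (-t)⟩

end Subgaussian

section Lintegral

variable {Ω : Type*} [MeasurableSpace Ω]

theorem lintegral_ofReal_le_mul_of_measure_lt_le {μ ν : Measure Ω} {f : Ω → ℝ}
    (hf : Measurable f) (hf0 : 0 ≤ f) {C : ℝ≥0∞}
    (h : ∀ t > 0, ν {ω | t < f ω} ≤ C * μ {ω | t < f ω}) :
    ∫⁻ ω, ENNReal.ofReal (f ω) ∂ν ≤ C * ∫⁻ ω, ENNReal.ofReal (f ω) ∂μ := by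
  have hanti : Antitone fun t : ℝ => μ {ω | t < f ω} :=
    fun _ _ hst => measure_mono fun _ hω => hst.trans_lt hω
  rw [lintegral_eq_lintegral_meas_lt ν (ae_of_all _ hf0) hf.aemeasurable,
    lintegral_eq_lintegral_meas_lt μ (ae_of_all _ hf0) hf.aemeasurable,
    ← lintegral_const_mul _ hanti.measurable]
  exact setLIntegral_mono' measurableSet_Ioi h

theorem lintegral_exp_add_le {μ : Measure Ω} {F G : Ω → ℝ} (hF : AEMeasurable F μ)
    (hG : AEMeasurable G μ) {α β : ℝ}
    (hFα : ∫⁻ ω, ENNReal.ofReal (exp (2 * F ω)) ∂μ ≤ ENNReal.ofReal (exp α))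
    (hGβ : ∫⁻ ω, ENNReal.ofReal (exp (2 * G ω)) ∂μ ≤ ENNReal.ofReal (exp β)) :
    ∫⁻ ω, ENNReal.ofReal (exp (F ω + G ω)) ∂μ ≤ ENNReal.ofReal (exp ((α + β) / 2)) := by
  have hrpow (v r : ℝ) : ENNReal.ofReal (exp v) ^ r = ENNReal.ofReal (exp (v * r)) := by
    rw [ENNReal.ofReal_rpow_of_pos (exp_pos v), exp_mul]
  have hmeas {H : Ω → ℝ} (hH : AEMeasurable H μ) :
      AEMeasurable (fun ω => ENNReal.ofReal (exp (H ω))) μ :=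
    ENNReal.measurable_ofReal.comp_aemeasurable (measurable_exp.comp_aemeasurable hH)
  calc ∫⁻ ω, ENNReal.ofReal (exp (F ω + G ω)) ∂μ
      = ∫⁻ ω, ENNReal.ofReal (exp (F ω)) * ENNReal.ofReal (exp (G ω)) ∂μ := by
        simp only [exp_add, ENNReal.ofReal_mul (exp_pos _).le]
    _ ≤ (∫⁻ ω, ENNReal.ofReal (exp (F ω)) ^ (2 : ℝ) ∂μ) ^ (1 / 2 : ℝ)
        * (∫⁻ ω, ENNReal.ofReal (exp (G ω)) ^ (2 : ℝ) ∂μ) ^ (1 / 2 : ℝ) :=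
        ENNReal.lintegral_mul_le_Lp_mul_Lq μ .two_two (hmeas hF) (hmeas hG)
    _ ≤ ENNReal.ofReal (exp α) ^ (1 / 2 : ℝ) * ENNReal.ofReal (exp β) ^ (1 / 2 : ℝ) := by
        gcongr
        · simpa only [hrpow, mul_comm _ (2 : ℝ)] using hFα
        · simpa only [hrpow, mul_comm _ (2 : ℝ)] using hGβ
    _ = ENNReal.ofReal (exp ((α + β) / 2)) := by
        rw [hrpow, hrpow, ← ENNReal.ofReal_mul (exp_pos _).le, ← exp_add]
        ring_nf

end Lintegral

section NegUpperOrthantDep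

variable {Ω ι : Type*} [MeasurableSpace Ω]

def NegUpperOrthantDep (P : Measure Ω) (Y : ι → Ω → ℝ) : Prop :=
  ∀ (s : Finset ι) (c : ι → ℝ), P {ω | ∀ k ∈ s, c k < Y k ω} ≤ ∏ k ∈ s, P {ω | c k < Y k ω}

variable {P : Measure Ω} {Y : ι → Ω → ℝ}

theorem NegUpperOrthantDep.setLIntegral_prod_exp_le [IsProbabilityMeasure P]
    (hY : NegUpperOrthantDep P Y) {b : ι → ℝ} {s : Finset ι} (hm : ∀ k ∈ s, Measurable (Y k))
    (hb : ∀ k ∈ s, 0 ≤ b k) {u : Finset ι} (hsu : Disjoint s u) (c : ι → ℝ) :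
    ∫⁻ ω in {ω | ∀ k ∈ u, c k < Y k ω}, ∏ k ∈ s, ENNReal.ofReal (exp (b k * Y k ω)) ∂P
      ≤ (∏ k ∈ u, P {ω | c k < Y k ω})
        * ∏ k ∈ s, ∫⁻ ω, ENNReal.ofReal (exp (b k * Y k ω)) ∂P := by
  classical
  induction s using Finset.induction_on generalizing u c with
  | empty => simpa using hY u c
  | insert j s hj ih =>
    rw [Finset.forall_mem_insert] at hm hb
    have hju : j ∉ u := Finset.disjoint_left.1 hsu (Finset.mem_insert_self j s)
    have hsu' : Disjoint s u := (Finset.disjoint_insert_left.1 hsu).2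
    rcases hb.1.eq_or_lt with hbj | hbj
    · simpa [Finset.prod_insert hj, ← hbj] using ih hm.2 hb.2 hsu' c
    set g : Ω → ℝ≥0∞ := fun ω => ∏ k ∈ s, ENNReal.ofReal (exp (b k * Y k ω))
    have hg : Measurable g := Finset.measurable_prod _ fun k hk =>
      ENNReal.measurable_ofReal.comp (measurable_exp.comp ((hm.2 k hk).const_mul _))
    have hf : Measurable fun ω => exp (b j * Y j ω) :=
      measurable_exp.comp (hm.1.const_mul _)
    set C := (∏ k ∈ u, P {ω | c k < Y k ω})
      * ∏ k ∈ s, ∫⁻ ω, ENNReal.ofReal (exp (b k * Y k ω)) ∂P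
    -- Layer cake in the j-th variable: each level set of `exp (b j * Y j)` is an upper orthant
    -- event, so the induction hypothesis applies to it with `j` added to `u`.
    have hlevel : ∀ t > 0, ((P.restrict {ω | ∀ k ∈ u, c k < Y k ω}).withDensity g)
        {ω | t < exp (b j * Y j ω)} ≤ C * P {ω | t < exp (b j * Y j ω)} := by
      intro t ht
      set c' := Function.update c j (log t / b j) with hc'_def
      have hc' : ∀ k ∈ u, c' k = c k :=
        fun k hk => Function.update_of_ne (ne_of_mem_of_not_mem hk hju) _ _
      have hlt : ∀ y, t < exp (b j * y) ↔ c' j < y := fun y => by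
        rw [hc'_def, Function.update_self, div_lt_iff₀' hbj, log_lt_iff_lt_exp ht]
      have hset : {ω | t < exp (b j * Y j ω)} ∩ {ω | ∀ k ∈ u, c k < Y k ω}
          = {ω | ∀ k ∈ insert j u, c' k < Y k ω} := by
        ext ω
        simp +contextual only [Set.mem_inter_iff, Set.mem_ofPred_eq, Finset.forall_mem_insert,
          hlt, hc']
      rw [withDensity_apply _ (measurableSet_lt measurable_const hf),
        Measure.restrict_restrict (measurableSet_lt measurable_const hf), hset]
      calc _ ≤ _ := ih hm.2 hb.2 (Finset.disjoint_insert_right.2 ⟨hj, hsu'⟩) _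
        _ = C * P {ω | t < exp (b j * Y j ω)} := by
          simp only [Finset.prod_insert hju, ← hlt, Finset.prod_congr rfl fun k hk =>
            congrArg (fun x => P {ω | x < Y k ω}) (hc' k hk), C]
          ring
    calc ∫⁻ ω in {ω | ∀ k ∈ u, c k < Y k ω},
          ∏ k ∈ insert j s, ENNReal.ofReal (exp (b k * Y k ω)) ∂P
        = ∫⁻ ω, ENNReal.ofReal (exp (b j * Y j ω))
            ∂(P.restrict {ω | ∀ k ∈ u, c k < Y k ω}).withDensity g := by
          rw [lintegral_withDensity_eq_lintegral_mul _ hg hf.ennreal_ofReal]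
          simp only [Finset.prod_insert hj, Pi.mul_apply, g, mul_comm]
      _ ≤ C * ∫⁻ ω, ENNReal.ofReal (exp (b j * Y j ω)) ∂P :=
          lintegral_ofReal_le_mul_of_measure_lt_le hf (fun _ => (exp_pos _).le) hlevel
      _ = _ := by rw [Finset.prod_insert hj]; ring

theorem NegUpperOrthantDep.lintegral_exp_sum_le [IsProbabilityMeasure P]
    (hY : NegUpperOrthantDep P Y) {s : Finset ι} (hm : ∀ k ∈ s, Measurable (Y k))
    {b σ : ι → ℝ} (hb : ∀ k ∈ s, 0 ≤ b k) (hσ : ∀ k ∈ s, IsSubgaussianWith P (Y k) (σ k)) :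
    ∫⁻ ω, ENNReal.ofReal (exp (∑ k ∈ s, b k * Y k ω)) ∂P
      ≤ ENNReal.ofReal (exp (∑ k ∈ s, σ k ^ 2 * b k ^ 2 / 2)) := by
  have hofReal_exp_sum (f : ι → ℝ) : ENNReal.ofReal (exp (∑ k ∈ s, f k))
      = ∏ k ∈ s, ENNReal.ofReal (exp (f k)) := by
    rw [exp_sum, ENNReal.ofReal_prod_of_nonneg fun k _ => (exp_pos _).le]
  calc ∫⁻ ω, ENNReal.ofReal (exp (∑ k ∈ s, b k * Y k ω)) ∂P
      = ∫⁻ ω, ∏ k ∈ s, ENNReal.ofReal (exp (b k * Y k ω)) ∂P := by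
        simp only [hofReal_exp_sum]
    _ ≤ ∏ k ∈ s, ∫⁻ ω, ENNReal.ofReal (exp (b k * Y k ω)) ∂P := by
        simpa using hY.setLIntegral_prod_exp_le hm hb (Finset.disjoint_empty_right s) 0
    _ ≤ ∏ k ∈ s, ENNReal.ofReal (exp (σ k ^ 2 * b k ^ 2 / 2)) :=
        Finset.prod_le_prod' fun k hk => (hσ k hk).2 (b k)
    _ = ENNReal.ofReal (exp (∑ k ∈ s, σ k ^ 2 * b k ^ 2 / 2)) := (hofReal_exp_sum _).symm

end NegUpperOrthantDep

section NegDep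

variable {Ω : Type*} [MeasurableSpace Ω] {P : Measure Ω} {X : ℕ → Ω → ℝ}

theorem NegDep.negUpperOrthantDep (hX : NegDep P X) : NegUpperOrthantDep P X :=
  fun s c => (hX s c).2

theorem NegDep.measure_forall_lt_le (hX : NegDep P X) (s : Finset ℕ) (d : ℕ → ℝ) :
    P {ω | ∀ k ∈ s, X k ω < d k} ≤ ∏ k ∈ s, P {ω | X k ω < d k} := by
  have hunion : {ω | ∀ k ∈ s, X k ω < d k}
      = ⋃ n : ℕ, {ω | ∀ k ∈ s, X k ω ≤ d k - 1 / (n + 1)} := by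
    ext ω
    simp only [Set.mem_ofPred_eq, Set.mem_iUnion]
    constructor
    · intro h
      have hev : ∀ k ∈ s, ∀ᶠ n : ℕ in atTop, X k ω ≤ d k - 1 / (n + 1) := fun k hk =>
        (tendsto_one_div_add_atTop_nhds_zero_nat.eventually
          (ge_mem_nhds (sub_pos.2 (h k hk)))).mono fun n hn => by linarith
      exact ((Filter.eventually_all_finset s).2 hev).exists
    · rintro ⟨n, hn⟩ k hk
      linarith [hn k hk, Nat.one_div_pos_of_nat (α := ℝ) (n := n)]
  have hmono : Monotone fun n : ℕ => {ω | ∀ k ∈ s, X k ω ≤ d k - 1 / (n + 1)} :=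
    fun p q hpq ω hω k hk => (hω k hk).trans (by gcongr)
  rw [hunion, hmono.measure_iUnion]
  refine iSup_le fun n => (hX s fun k => d k - 1 / (n + 1)).1.trans ?_
  refine Finset.prod_le_prod' fun k _ => measure_mono fun ω hω => ?_
  exact (show X k ω ≤ _ from hω).trans_lt (sub_lt_self _ Nat.one_div_pos_of_nat)

theorem NegDep.negUpperOrthantDep_neg (hX : NegDep P X) :
    NegUpperOrthantDep P fun k ω => -X k ω := by
  intro s c
  have hneg (k : ℕ) (ω : Ω) : c k < -X k ω ↔ X k ω < -c k := lt_neg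
  simp only [hneg]
  exact hX.measure_forall_lt_le s fun k => -c k

theorem NegDep.lintegral_exp_sum_le [IsProbabilityMeasure P] (hX : NegDep P X)
    {s : Finset ℕ} (hm : ∀ k ∈ s, Measurable (X k)) {σ : ℕ → ℝ}
    (hσ : ∀ k ∈ s, IsSubgaussianWith P (X k) (σ k)) (b : ℕ → ℝ) :
    ∫⁻ ω, ENNReal.ofReal (exp (∑ k ∈ s, b k * X k ω)) ∂P
      ≤ ENNReal.ofReal (exp (∑ k ∈ s, σ k ^ 2 * b k ^ 2)) := by
  classical
  set A := s.filter fun k => 0 ≤ b k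
  set B := s.filter fun k => ¬ 0 ≤ b k
  have hA : ∀ k ∈ A, k ∈ s ∧ 0 ≤ b k := fun k hk => Finset.mem_filter.1 hk
  have hB : ∀ k ∈ B, k ∈ s ∧ b k < 0 := fun k hk => by
    simpa only [not_le] using Finset.mem_filter.1 hk
  have hmeas (T : Finset ℕ) (hT : T ⊆ s) : AEMeasurable (fun ω => ∑ k ∈ T, b k * X k ω) P :=
    (Finset.measurable_sum T fun k hk => (hm k (hT hk)).const_mul _).aemeasurable
  have hApos := hX.negUpperOrthantDep.lintegral_exp_sum_le (s := A) (b := fun k => 2 * b k)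
    (fun k hk => hm k (hA k hk).1) (fun k hk => by linarith [(hA k hk).2])
    (fun k hk => hσ k (hA k hk).1)
  have hBneg := hX.negUpperOrthantDep_neg.lintegral_exp_sum_le (s := B)
    (b := fun k => -(2 * b k)) (fun k hk => (hm k (hB k hk).1).neg)
    (fun k hk => by linarith [(hB k hk).2]) (fun k hk => (hσ k (hB k hk).1).neg)
  simp only [neg_mul_neg, neg_sq, mul_assoc, ← Finset.mul_sum] at hApos hBneg
  calc ∫⁻ ω, ENNReal.ofReal (exp (∑ k ∈ s, b k * X k ω)) ∂P
      = ∫⁻ ω, ENNReal.ofReal (exp (∑ k ∈ A, b k * X k ω + ∑ k ∈ B, b k * X k ω)) ∂P := by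
        simp only [A, B, Finset.sum_filter_add_sum_filter_not]
    _ ≤ _ := lintegral_exp_add_le (hmeas A (Finset.filter_subset _ _))
        (hmeas B (Finset.filter_subset _ _)) hApos hBneg
    _ = ENNReal.ofReal (exp (∑ k ∈ s, σ k ^ 2 * b k ^ 2)) := by
        rw [Finset.sum_filter_add_sum_filter_not, Finset.sum_div]
        congr 3 with k
        ring

end NegDep

/-- Proposition 4.6 (2): weighted sums of negatively dependent subgaussian
random variables. -/
theorem stmt11 {Ω : Type*} [MeasurableSpace Ω] (P : Measure Ω) [IsProbabilityMeasure P]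
    (X : ℕ → Ω → ℝ) (hmeas : ∀ k, 1 ≤ k → Measurable (X k))
    (hND : NegDep P X) (τ : ℕ → ℝ)
    (hsub : ∀ k, 1 ≤ k → Subgaussian P (X k))
    (hτ : ∀ k, 1 ≤ k → τ k = subgStd P (X k))
    (a : ℕ → ℝ) :
    ∀ n m : ℕ, n < m → ∀ t : ℝ,
      ∫⁻ ω, ENNReal.ofReal (Real.exp (t * ∑ k ∈ Finset.Icc (n + 1) m, a k * X k ω)) ∂P
        ≤ ENNReal.ofReal
            (Real.exp (t ^ 2 * ∑ k ∈ Finset.Icc (n + 1) m, a k ^ 2 * τ k ^ 2)) := by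
  intro n m _ t
  have hpos : ∀ k ∈ Finset.Icc (n + 1) m, 1 ≤ k := fun k hk =>
    (Nat.le_add_left 1 n).trans (Finset.mem_Icc.1 hk).1
  have hτsub : ∀ k ∈ Finset.Icc (n + 1) m, IsSubgaussianWith P (X k) (τ k) := fun k hk => by
    rw [hτ k (hpos k hk)]
    exact (hsub k (hpos k hk)).isSubgaussianWith_subgStd
  calc ∫⁻ ω, ENNReal.ofReal (exp (t * ∑ k ∈ Finset.Icc (n + 1) m, a k * X k ω)) ∂P
      = ∫⁻ ω, ENNReal.ofReal (exp (∑ k ∈ Finset.Icc (n + 1) m, (t * a k) * X k ω)) ∂P := by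
        simp only [Finset.mul_sum, mul_assoc]
    _ ≤ ENNReal.ofReal (exp (∑ k ∈ Finset.Icc (n + 1) m, τ k ^ 2 * (t * a k) ^ 2)) :=
        hND.lintegral_exp_sum_le (fun k hk => hmeas k (hpos k hk)) hτsub _
    _ = ENNReal.ofReal (exp (t ^ 2 * ∑ k ∈ Finset.Icc (n + 1) m, a k ^ 2 * τ k ^ 2)) := by
        rw [Finset.mul_sum]
        congr 3 with k
        ring
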